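/- There is a unique ℤ_[2]-algebra homomorphism σ : R → R with σ(a₁) = −a₁, σ(a₃) = −a₃, and σ(a₆) = a₆; it satisfies σ ∘ σ = id, and its fixed subring {r ∈ R : σ(r) = r} equals the ℤ_[2]-subalgebra of R generated by a₁², a₁·a₃, a₃², and a₆. (This computes the degree-zero group cohomology of the deck transformation of the double cover 𝒴 → 𝒳ᴰ acting on automorphic forms.) -/

import Mathlib

open MvPolynomial

noncomputable section

/-- `c = a₁⁶ + a₁³a₃ + a₃²` in `P = ℤ_[2][a₁, a₃, a₆]` (with `X 0 = a₁`, `X 1 = a₃`, `X 2 = a₆`). -/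
def cpoly : MvPolynomial (Fin 3) ℤ_[2] := (X 0) ^ 6 + (X 0) ^ 3 * X 1 + (X 1) ^ 2

/-- `f = a₆² + a₆·c + c² − (5/9)·a₁⁶·c` in `P`. -/
def fpoly : MvPolynomial (Fin 3) ℤ_[2] :=
  (X 2) ^ 2 + X 2 * cpoly + cpoly ^ 2 - C (5 * Ring.inverse 9) * (X 0) ^ 6 * cpoly

/-- `R = P/(f)`, the ring of automorphic forms on the double cover `𝒴`. -/
abbrev RD : Type := MvPolynomial (Fin 3) ℤ_[2] ⧸ Ideal.span {fpoly}

/-- The image of `a₁` in `R`. -/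
def b₁ : RD := Ideal.Quotient.mk _ (X 0)
/-- The image of `a₃` in `R`. -/
def b₃ : RD := Ideal.Quotient.mk _ (X 1)
/-- The image of `a₆` in `R`. -/
def b₆ : RD := Ideal.Quotient.mk _ (X 2)

/-!
The involution `a₁ ↦ -a₁, a₃ ↦ -a₃, a₆ ↦ a₆` of `P` fixes `c` and hence `f`, so it descends to
`R`; an algebra map out of `R` is determined by the images of `a₁, a₃, a₆`, which gives
uniqueness and `σ ∘ σ = id`. For the invariants, write a lift of `r` as `e + o` with `e` in
`ℤ_[2][a₁², a₁a₃, a₃², a₆]` and `o ∈ a₁·(…) + a₃·(…)` odd. Then `σ r = r` says `f ∣ 2o`. Since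
`2` is prime in `P` and `f(0, 0, 1) = 1` shows `2 ∤ f`, we get `f ∣ o`, so `r` is the class of `e`.
-/

section Parity

variable {R : Type*} [CommRing R]

def signFlip : MvPolynomial (Fin 3) R →ₐ[R] MvPolynomial (Fin 3) R :=
  aeval ![-X 0, -X 1, X 2]

@[simp] lemma signFlip_X0 : signFlip (X 0 : MvPolynomial (Fin 3) R) = -X 0 := by simp [signFlip]
@[simp] lemma signFlip_X1 : signFlip (X 1 : MvPolynomial (Fin 3) R) = -X 1 := by simp [signFlip]
@[simp] lemma signFlip_X2 : signFlip (X 2 : MvPolynomial (Fin 3) R) = X 2 := by simp [signFlip]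

lemma signFlip_comp_signFlip : (signFlip : MvPolynomial (Fin 3) R →ₐ[R] _).comp signFlip =
    AlgHom.id R _ := by
  ext i
  fin_cases i <;> simp

def evenSubalgebra : Subalgebra R (MvPolynomial (Fin 3) R) :=
  Algebra.adjoin R {X 0 ^ 2, X 0 * X 1, X 1 ^ 2, X 2}

lemma signFlip_eq_self_of_mem_evenSubalgebra {p : MvPolynomial (Fin 3) R}
    (hp : p ∈ evenSubalgebra) : signFlip p = p := by
  suffices evenSubalgebra ≤ AlgHom.equalizer signFlip (AlgHom.id R _) from this hp
  rw [evenSubalgebra, Algebra.adjoin_le_iff]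
  rintro y (rfl | rfl | rfl | rfl) <;> simp

lemma exists_eq_add_X0_mul_add_X1_mul (p : MvPolynomial (Fin 3) R) :
    ∃ e q₀ q₁, e ∈ evenSubalgebra ∧ q₀ ∈ evenSubalgebra ∧ q₁ ∈ evenSubalgebra ∧
      p = e + X 0 * q₀ + X 1 * q₁ := by
  have mem : ∀ y ∈ ({X 0 ^ 2, X 0 * X 1, X 1 ^ 2, X 2} : Set (MvPolynomial (Fin 3) R)),
      y ∈ evenSubalgebra := fun y hy => Algebra.subset_adjoin hy
  induction p using MvPolynomial.induction_on with
  | C a => exact ⟨C a, 0, 0, evenSubalgebra.algebraMap_mem a, zero_mem _, zero_mem _, by simp⟩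
  | add p q hp hq =>
    obtain ⟨e, p₀, p₁, he, hp₀, hp₁, rfl⟩ := hp
    obtain ⟨e', q₀, q₁, he', hq₀, hq₁, rfl⟩ := hq
    exact ⟨e + e', p₀ + q₀, p₁ + q₁, add_mem he he', add_mem hp₀ hq₀, add_mem hp₁ hq₁, by ring⟩
  | mul_X p i hp =>
    obtain ⟨e, q₀, q₁, he, hq₀, hq₁, rfl⟩ := hp
    fin_cases i
    · exact ⟨X 0 ^ 2 * q₀ + X 0 * X 1 * q₁, e, 0,
        add_mem (mul_mem (mem _ (by simp)) hq₀) (mul_mem (mem _ (by simp)) hq₁), he,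
        zero_mem _, by simp; ring⟩
    · exact ⟨X 0 * X 1 * q₀ + X 1 ^ 2 * q₁, 0, e,
        add_mem (mul_mem (mem _ (by simp)) hq₀) (mul_mem (mem _ (by simp)) hq₁), zero_mem _,
        he, by simp; ring⟩
    · exact ⟨e * X 2, q₀ * X 2, q₁ * X 2, mul_mem he (mem _ (by simp)),
        mul_mem hq₀ (mem _ (by simp)), mul_mem hq₁ (mem _ (by simp)), by simp; ring⟩

end Parity

lemma dvd_of_dvd_mul_of_prime_of_not_dvd {A : Type*} [CommRing A] [IsDomain A] {p f q : A}
    (hp : Prime p) (hf : ¬p ∣ f) (h : f ∣ p * q) : f ∣ q := by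
  obtain ⟨g, hg⟩ := h
  obtain ⟨g', rfl⟩ := (hp.dvd_or_dvd ⟨q, hg.symm⟩).resolve_left hf
  exact ⟨g', mul_left_cancel₀ hp.ne_zero (by rw [hg]; ring)⟩

lemma signFlip_cpoly : signFlip cpoly = cpoly := by
  simp only [cpoly, map_add, map_mul, map_pow, signFlip_X0, signFlip_X1]
  ring

lemma signFlip_fpoly : signFlip fpoly = fpoly := by
  simp only [fpoly, map_sub, map_add, map_mul, map_pow, signFlip_X0, signFlip_X2, signFlip_cpoly,
    algHom_C, algebraMap_eq]
  ring

lemma fpoly_dvd_of_dvd_two_mul {q : MvPolynomial (Fin 3) ℤ_[2]} (h : fpoly ∣ 2 * q) :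
    fpoly ∣ q := by
  have two_prime : Prime (2 : ℤ_[2]) := by exact_mod_cast PadicInt.prime_p (p := 2)
  have two_not_dvd : ¬C 2 ∣ fpoly := fun h2 => by
    have h1 : (2 : ℤ_[2]) ∣ 1 := by simpa [fpoly, cpoly] using map_dvd (eval ![0, 0, 1]) h2
    exact two_prime.not_isUnit (isUnit_of_dvd_one h1)
  exact dvd_of_dvd_mul_of_prime_of_not_dvd ((prime_C_iff (Fin 3)).mpr two_prime) two_not_dvd
    (by rwa [map_ofNat C 2])

lemma span_fpoly_le_comap_signFlip :
    Ideal.span {fpoly} ≤ (Ideal.span {fpoly}).comap signFlip := by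
  rw [Ideal.span_le, Set.singleton_subset_iff, SetLike.mem_coe, Ideal.mem_comap, signFlip_fpoly]
  exact Ideal.subset_span rfl

local notation "π" => (Ideal.Quotient.mkₐ ℤ_[2] _ : MvPolynomial (Fin 3) ℤ_[2] →ₐ[ℤ_[2]] RD)

def deckTransformation : RD →ₐ[ℤ_[2]] RD :=
  Ideal.quotientMapₐ _ signFlip span_fpoly_le_comap_signFlip

lemma comp_mkₐ_eq_iff (σ : RD →ₐ[ℤ_[2]] RD) :
    σ.comp π = (π).comp signFlip ↔ σ b₁ = -b₁ ∧ σ b₃ = -b₃ ∧ σ b₆ = b₆ := by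
  rw [MvPolynomial.algHom_ext_iff, Fin.forall_fin_succ, Fin.forall_fin_succ, Fin.forall_fin_one]
  simp [b₁, b₃, b₆]

lemma map_evenSubalgebra_mkₐ :
    evenSubalgebra.map π = Algebra.adjoin ℤ_[2] ({b₁ ^ 2, b₁ * b₃, b₃ ^ 2, b₆} : Set RD) := by
  rw [evenSubalgebra.eq_def, AlgHom.map_adjoin]
  simp [Set.image_insert_eq, b₁, b₃, b₆]

lemma eq_self_iff_mem_adjoin {σ : RD →ₐ[ℤ_[2]] RD} (hσ : σ.comp π = (π).comp signFlip) (r : RD) :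
    σ r = r ↔ r ∈ Algebra.adjoin ℤ_[2] ({b₁ ^ 2, b₁ * b₃, b₃ ^ 2, b₆} : Set RD) := by
  have hσ' (p) : σ (Ideal.Quotient.mk _ p) = Ideal.Quotient.mk _ (signFlip p) := by
    simpa using DFunLike.congr_fun hσ p
  rw [← map_evenSubalgebra_mkₐ, Subalgebra.mem_map]
  constructor
  · intro hr
    obtain ⟨p, rfl⟩ := Ideal.Quotient.mk_surjective r
    obtain ⟨e, q₀, q₁, he, hq₀, hq₁, rfl⟩ := exists_eq_add_X0_mul_add_X1_mul p
    have hflip : signFlip (e + X 0 * q₀ + X 1 * q₁) =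
        e + X 0 * q₀ + X 1 * q₁ - 2 * (X 0 * q₀ + X 1 * q₁) := by
      simp only [map_add, map_mul, signFlip_X0, signFlip_X1,
        signFlip_eq_self_of_mem_evenSubalgebra, he, hq₀, hq₁]
      ring
    rw [hσ', hflip, map_sub, sub_eq_self, Ideal.Quotient.eq_zero_iff_mem,
      Ideal.mem_span_singleton] at hr
    obtain ⟨g, hg⟩ := fpoly_dvd_of_dvd_two_mul hr
    refine ⟨e, he, ?_⟩
    rw [Ideal.Quotient.mkₐ_eq_mk, Ideal.Quotient.eq, Ideal.mem_span_singleton]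
    exact ⟨-g, by rw [mul_neg, ← hg]; ring⟩
  · rintro ⟨p, hp, rfl⟩
    rw [Ideal.Quotient.mkₐ_eq_mk, hσ', signFlip_eq_self_of_mem_evenSubalgebra hp]

/-- There is a unique `ℤ_[2]`-algebra homomorphism `σ : R → R` with
`σ(a₁) = −a₁`, `σ(a₃) = −a₃`, `σ(a₆) = a₆`; it is an involution and its fixed subring is
the `ℤ_[2]`-subalgebra generated by `a₁², a₁a₃, a₃², a₆`.  (Deck transformation of the
double cover `𝒴 → 𝒳ᴰ` acting on automorphic forms.) -/
theorem deck_involution_and_invariants :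
    (∃! σ : RD →ₐ[ℤ_[2]] RD, σ b₁ = -b₁ ∧ σ b₃ = -b₃ ∧ σ b₆ = b₆) ∧
    ∀ σ : RD →ₐ[ℤ_[2]] RD, σ b₁ = -b₁ → σ b₃ = -b₃ → σ b₆ = b₆ →
      σ.comp σ = AlgHom.id ℤ_[2] RD ∧
      ∀ r : RD, σ r = r ↔
        r ∈ Algebra.adjoin ℤ_[2] ({b₁ ^ 2, b₁ * b₃, b₃ ^ 2, b₆} : Set RD) := by
  have deck_comp : deckTransformation.comp π = (π).comp signFlip :=
    Ideal.quotient_map_comp_mkₐ _ _ _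
  refine ⟨⟨deckTransformation, (comp_mkₐ_eq_iff _).mp deck_comp, fun σ hσ => ?_⟩,
    fun σ h₁ h₃ h₆ => ?_⟩
  · exact Ideal.Quotient.algHom_ext _ (((comp_mkₐ_eq_iff σ).mpr hσ).trans deck_comp.symm)
  · have hσ := (comp_mkₐ_eq_iff σ).mpr ⟨h₁, h₃, h₆⟩
    refine ⟨Ideal.Quotient.algHom_ext _ ?_, eq_self_iff_mem_adjoin hσ⟩
    rw [AlgHom.comp_assoc, hσ, ← AlgHom.comp_assoc, hσ, AlgHom.comp_assoc,
      signFlip_comp_signFlip]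
    rfl
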